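/- arXiv:2505.11335 — 3 statements merged into one kernel-verified Lean document; each statement's English description precedes it below -/
import Mathlib

section
/- (Theorem 1) Let c ≥ 1, d ≥ 1, let h, h' : Fin d → ℝ, W : Fin d → Fin c → ℝ, y, s : Fin c → ℝ, and let η > 0, λ > 0 with η·λ < 1. Set τ = 1/(1 − η·λ), b i = ⟨W_i, h'⟩ where W_i is the i-th column of W and ⟨·,·⟩ is the Euclidean inner product, and ψ i j = exp( η·(s i − y i − s j + y j)·⟨h, h'⟩ ). Define the one-step gradient update W' a i = (1 − η·λ)·(W a i) − η·(s i − y i)·(h a), the updated logits z' i = ∑_a (W' a i)·(h' a), and the updated probabilities s' i = exp(z' i)/∑_k exp(z' k). Then for every index i, s' i = exp(b i / τ) / ( exp(b i / τ) + ∑_{j ≠ i} exp(b j / τ) · (ψ i j) ). -/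
/-!
Since `1 / τ = 1 - ηλ`, the gradient step gives `z' j = b j / τ - η (s j - y j) ⟨h, h'⟩`.
Multiplying `exp (b j / τ)` by `ψ i j` replaces this class-dependent correction by the shift
`η (s i - y i) ⟨h, h'⟩`, common to all `j`, and softmax is invariant under a common shift of
its arguments; `ψ i i = 1` accounts for the isolated `i`-th term.
-/

open Finset Real

theorem Real.exp_div_sum_exp_add_const {ι : Type*} [Fintype ι] (z : ι → ℝ) (t : ℝ) (i : ι) :
    exp (z i) / ∑ k, exp (z k) = exp (z i + t) / ∑ k, exp (z k + t) := by
  simp only [exp_add, ← sum_mul, mul_div_mul_right _ _ (exp_ne_zero t)]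

theorem sum_mul_sub_mul_mul {ι : Type*} [Fintype ι] (w h h' : ι → ℝ) (α g : ℝ) :
    ∑ a, (α * w a - g * h a) * h' a = α * ∑ a, w a * h' a - g * ∑ a, h a * h' a := by
  simp only [sub_mul, sum_sub_distrib, mul_sum, mul_assoc]

theorem updated_probabilities_tempered_softmax_general (c d : ℕ)
    (h h' : Fin d → ℝ) (W : Fin d → Fin c → ℝ) (y s : Fin c → ℝ)
    (η lam : ℝ)
    (τ : ℝ) (hτ : τ = 1 / (1 - η * lam))
    (b : Fin c → ℝ) (hb : ∀ i, b i = ∑ a, W a i * h' a)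
    (ψ : Fin c → Fin c → ℝ)
    (hψ : ∀ i j, ψ i j = Real.exp (η * (s i - y i - s j + y j) * ∑ a, h a * h' a))
    (W' : Fin d → Fin c → ℝ)
    (hW' : ∀ a i, W' a i = (1 - η * lam) * W a i - η * (s i - y i) * h a)
    (z' : Fin c → ℝ) (hz' : ∀ i, z' i = ∑ a, W' a i * h' a)
    (s' : Fin c → ℝ) (hs' : ∀ i, s' i = Real.exp (z' i) / ∑ k, Real.exp (z' k))
    (i : Fin c) :
    s' i = Real.exp (b i / τ) /
      (Real.exp (b i / τ) + ∑ j ∈ Finset.univ.erase i, Real.exp (b j / τ) * ψ i j) := by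
  set P := ∑ a, h a * h' a
  have hlogit : ∀ k, z' k = b k / τ - η * (s k - y k) * P := fun k => by
    simp only [hz', hW']
    rw [sum_mul_sub_mul_mul (fun a => W a k), hb, hτ, div_div_eq_mul_div, div_one, mul_comm]
  have hshift : ∀ k, exp (b k / τ) * ψ i k = exp (z' k + η * (s i - y i) * P) := fun k => by
    rw [hψ, ← exp_add, hlogit]
    ring_nf
  have hψii : ψ i i = 1 := by simp [hψ]
  calc s' i = exp (z' i + η * (s i - y i) * P) / ∑ k, exp (z' k + η * (s i - y i) * P) := by
        rw [hs', exp_div_sum_exp_add_const]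
    _ = exp (b i / τ) * ψ i i / ∑ k, exp (b k / τ) * ψ i k := by simp only [hshift]
    _ = _ := by rw [← add_sum_erase _ _ (mem_univ i), hψii, mul_one]

/-- Theorem 1: With `τ = 1/(1 - η·λ)`, `b i = ⟨W_i, h'⟩`,
`ψ i j = exp (η·(s i - y i - s j + y j)·⟨h, h'⟩)`, one-step gradient update
`W' a i = (1 - η·λ)·(W a i) - η·(s i - y i)·(h a)`, updated logits
`z' i = ∑ a, W' a i * h' a` and updated probabilities `s' = softmax z'`, one has
`s' i = exp (b i / τ) / (exp (b i / τ) + ∑_{j ≠ i} exp (b j / τ) * ψ i j)`. -/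
theorem updated_probabilities_tempered_softmax (c d : ℕ) (hc : 1 ≤ c) (hd : 1 ≤ d)
    (h h' : Fin d → ℝ) (W : Fin d → Fin c → ℝ) (y s : Fin c → ℝ)
    (η lam : ℝ) (hη : 0 < η) (hlam : 0 < lam) (hetalam : η * lam < 1)
    (τ : ℝ) (hτ : τ = 1 / (1 - η * lam))
    (b : Fin c → ℝ) (hb : ∀ i, b i = ∑ a, W a i * h' a)
    (ψ : Fin c → Fin c → ℝ)
    (hψ : ∀ i j, ψ i j = Real.exp (η * (s i - y i - s j + y j) * ∑ a, h a * h' a))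
    (W' : Fin d → Fin c → ℝ)
    (hW' : ∀ a i, W' a i = (1 - η * lam) * W a i - η * (s i - y i) * h a)
    (z' : Fin c → ℝ) (hz' : ∀ i, z' i = ∑ a, W' a i * h' a)
    (s' : Fin c → ℝ) (hs' : ∀ i, s' i = Real.exp (z' i) / ∑ k, Real.exp (z' k))
    (i : Fin c) :
    s' i = Real.exp (b i / τ) /
      (Real.exp (b i / τ) + ∑ j ∈ Finset.univ.erase i, Real.exp (b j / τ) * ψ i j) :=
  updated_probabilities_tempered_softmax_general c d h h' W y s η lam τ hτ b hb ψ hψ W' hW' z' hz'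
    s' hs' i
end

section
/- Let c ≥ 2 and let z : Fin c → ℝ be a non-constant vector (there exist i, j with z i ≠ z j). For τ > 0, define the tempered softmax s(τ) i = exp(z i / τ) / ∑_k exp(z k / τ) and its Shannon entropy H(τ) = −∑_i s(τ) i · log(s(τ) i). Then H is strictly monotonically increasing on (0, ∞): for all 0 < τ₁ < τ₂, H(τ₁) < H(τ₂). -/
/-!
Write `β = 1/τ` for the inverse temperature, `Z(β) = ∑ exp (β zᵢ)` and `E(β) = ∑ sᵢ zᵢ` for the
mean of `z` under the softmax `s`. Then `log sᵢ = β zᵢ - log Z`, so the entropy is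
`log Z(β) - β E(β)`. Jensen's inequality for the strictly convex `exp` makes `log Z` strictly convex
with slope `E`: `log Z(β) + (β' - β) E(β) < log Z(β')` for `β ≠ β'` when `z` is non-constant.
Adding two such tangent inequalities shows `E` strictly increasing, and one of them then gives
`H(β₁) < H(β₂) + β₂ (E(β₂) - E(β₁)) < H(β₂)` whenever `0 ≤ β₂ < β₁`.
-/

open Real Finset

namespace Gibbs

variable {ι : Type*} [Fintype ι] (z : ι → ℝ)

noncomputable def partitionFn (β : ℝ) : ℝ := ∑ i, exp (β * z i)

noncomputable def prob (β : ℝ) (i : ι) : ℝ := exp (β * z i) / partitionFn z β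

noncomputable def meanEnergy (β : ℝ) : ℝ := ∑ i, prob z β i * z i

noncomputable def entropy (β : ℝ) : ℝ := -∑ i, prob z β i * log (prob z β i)

variable {z}

lemma partitionFn_pos [Nonempty ι] (β : ℝ) : 0 < partitionFn z β :=
  sum_pos (fun _ _ ↦ exp_pos _) univ_nonempty

lemma prob_pos [Nonempty ι] (β : ℝ) (i : ι) : 0 < prob z β i :=
  div_pos (exp_pos _) (partitionFn_pos β)

lemma sum_prob [Nonempty ι] (β : ℝ) : ∑ i, prob z β i = 1 := by
  simp only [prob, ← sum_div]
  exact div_self (partitionFn_pos β).ne'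

lemma log_prob [Nonempty ι] (β : ℝ) (i : ι) :
    log (prob z β i) = β * z i - log (partitionFn z β) := by
  rw [prob, log_div (exp_ne_zero _) (partitionFn_pos β).ne', log_exp]

lemma entropy_eq [Nonempty ι] (β : ℝ) :
    entropy z β = log (partitionFn z β) - β * meanEnergy z β := by
  have hterm : ∀ i, prob z β i * log (prob z β i)
      = β * (prob z β i * z i) - log (partitionFn z β) * prob z β i := fun i ↦ by
    rw [log_prob]; ring
  simp only [entropy, meanEnergy, hterm, sum_sub_distrib, ← mul_sum, sum_prob]
  ring

lemma sum_prob_mul_exp (β t : ℝ) :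
    ∑ i, prob z β i * exp (t * z i) = partitionFn z (β + t) / partitionFn z β := by
  simp only [prob, div_mul_eq_mul_div, ← exp_add, ← add_mul, ← sum_div]
  rfl

lemma log_partitionFn_add_mul_meanEnergy_lt (hz : ∃ i j, z i ≠ z j) {β β' : ℝ} (hne : β ≠ β') :
    log (partitionFn z β) + (β' - β) * meanEnergy z β < log (partitionFn z β') := by
  obtain ⟨j, k, hjk⟩ := hz
  have : Nonempty ι := ⟨j⟩
  have ht : β' - β ≠ 0 := sub_ne_zero.2 hne.symm
  have jensen := strictConvexOn_exp.map_sum_lt (t := univ) (p := fun i ↦ (β' - β) * z i)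
    (fun i _ ↦ prob_pos (z := z) β i) (sum_prob β) (fun _ _ ↦ Set.mem_univ _)
    ⟨j, mem_univ _, k, mem_univ _, fun h ↦ hjk (mul_left_cancel₀ ht h)⟩
  have hmean : ∑ i, prob z β i * ((β' - β) * z i) = (β' - β) * meanEnergy z β := by
    simp only [meanEnergy, mul_sum]
    exact sum_congr rfl fun i _ ↦ by ring
  simp only [smul_eq_mul, sum_prob_mul_exp, add_sub_cancel, hmean] at jensen
  have hlog := log_lt_log (exp_pos _) jensen
  rw [log_exp, log_div (partitionFn_pos β').ne' (partitionFn_pos β).ne'] at hlog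
  linarith

lemma meanEnergy_strictMono (hz : ∃ i j, z i ≠ z j) : StrictMono (meanEnergy z) := by
  intro β β' hlt
  have h := log_partitionFn_add_mul_meanEnergy_lt hz hlt.ne
  have h' := log_partitionFn_add_mul_meanEnergy_lt hz hlt.ne'
  nlinarith

lemma entropy_strictAntiOn (hz : ∃ i j, z i ≠ z j) : StrictAntiOn (entropy z) (Set.Ici 0) := by
  intro β₂ hβ₂ β₁ _ hlt
  have : Nonempty ι := ⟨hz.choose⟩
  have htangent := log_partitionFn_add_mul_meanEnergy_lt hz hlt.ne'
  have hmono := meanEnergy_strictMono hz hlt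
  rw [entropy_eq, entropy_eq]
  nlinarith [Set.mem_Ici.1 hβ₂]

end Gibbs

theorem tempered_softmax_entropy_strictMono_general (c : ℕ) (z : Fin c → ℝ)
    (hz : ∃ i j, z i ≠ z j)
    (s : ℝ → Fin c → ℝ)
    (hs : ∀ τ i, s τ i = Real.exp (z i / τ) / ∑ k, Real.exp (z k / τ))
    (H : ℝ → ℝ) (hH : ∀ τ, H τ = -∑ i, s τ i * Real.log (s τ i))
    (τ₁ τ₂ : ℝ) (h1 : 0 < τ₁) (h12 : τ₁ < τ₂) :
    H τ₁ < H τ₂ := by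
  have hH_entropy : ∀ τ, H τ = Gibbs.entropy z τ⁻¹ := fun τ ↦ by
    simp only [hH, hs, Gibbs.entropy, Gibbs.prob, Gibbs.partitionFn, inv_mul_eq_div]
  rw [hH_entropy, hH_entropy]
  exact Gibbs.entropy_strictAntiOn hz (inv_pos.2 (h1.trans h12)).le (inv_pos.2 h1).le
    (inv_strictAntiOn h1 (h1.trans h12) h12)

/-- For a non-constant logit vector `z`, the Shannon entropy of the
tempered softmax `s τ i = exp (z i / τ) / ∑ k, exp (z k / τ)` is strictly increasing
in the temperature `τ` on `(0, ∞)`. -/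
theorem tempered_softmax_entropy_strictMono (c : ℕ) (hc : 2 ≤ c) (z : Fin c → ℝ)
    (hz : ∃ i j, z i ≠ z j)
    (s : ℝ → Fin c → ℝ)
    (hs : ∀ τ i, s τ i = Real.exp (z i / τ) / ∑ k, Real.exp (z k / τ))
    (H : ℝ → ℝ) (hH : ∀ τ, H τ = -∑ i, s τ i * Real.log (s τ i))
    (τ₁ τ₂ : ℝ) (h1 : 0 < τ₁) (h12 : τ₁ < τ₂) :
    H τ₁ < H τ₂ :=
  tempered_softmax_entropy_strictMono_general c z hz s hs H hH τ₁ τ₂ h1 h12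
end

section
/- Let c ≥ 2 and let z : Fin c → ℝ have a strict unique maximizer, i.e., there exists i₀ such that z j < z i₀ for all j ≠ i₀. For τ > 0, define the tempered softmax s(τ) i = exp(z i / τ) / ∑_k exp(z k / τ). Then the confidence at the maximizer is strictly decreasing in temperature: for all 0 < τ₁ < τ₂, s(τ₂) i₀ < s(τ₁) i₀. -/
/-!
Dividing numerator and denominator by `exp (z i₀ / τ)` writes the confidence as
`(∑ k, exp ((z k - z i₀) / τ))⁻¹`. The `i₀`-term of this sum is `1`, while every other
exponent `(z k - z i₀) / τ` is negative and hence strictly increasing in `τ`; so the sum grows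
strictly with the temperature and the confidence falls.
-/

open Finset Real

theorem exp_div_sum_exp_eq_inv_sum_exp_sub {ι : Type*} [Fintype ι] (f : ι → ℝ) (i : ι) :
    exp (f i) / ∑ k, exp (f k) = (∑ k, exp (f k - f i))⁻¹ := by
  simp_rw [exp_sub, ← Finset.sum_div, inv_div]

theorem div_le_div_left_of_nonpos {a b c : ℝ} (ha : a ≤ 0) (hb : 0 < b) (hbc : b ≤ c) :
    a / b ≤ a / c := by
  simpa only [div_eq_mul_inv] using mul_le_mul_of_nonpos_left (inv_anti₀ hb hbc) ha

theorem div_lt_div_left_of_neg {a b c : ℝ} (ha : a < 0) (hb : 0 < b) (hbc : b < c) :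
    a / b < a / c := by
  simpa only [div_eq_mul_inv] using mul_lt_mul_of_neg_left (inv_strictAnti₀ hb hbc) ha

theorem sum_exp_sub_max_div_lt {ι : Type*} [Fintype ι] [Nontrivial ι] {z : ι → ℝ} {i₀ : ι}
    (hmax : ∀ j, j ≠ i₀ → z j < z i₀) {τ₁ τ₂ : ℝ} (h1 : 0 < τ₁) (h12 : τ₁ < τ₂) :
    ∑ k, exp ((z k - z i₀) / τ₁) < ∑ k, exp ((z k - z i₀) / τ₂) := by
  have hle : ∀ k, z k ≤ z i₀ := fun k =>
    (eq_or_ne k i₀).elim (fun hk => hk ▸ le_rfl) fun hk => (hmax k hk).le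
  obtain ⟨j, hj⟩ := exists_ne i₀
  refine sum_lt_sum (fun k _ => ?_) ⟨j, mem_univ j, ?_⟩
  · exact exp_le_exp.2 (div_le_div_left_of_nonpos (sub_nonpos.2 (hle k)) h1 h12.le)
  · exact exp_lt_exp.2 (div_lt_div_left_of_neg (sub_neg.2 (hmax j hj)) h1 h12)

/-- If `z` has a strict unique maximizer `i₀`, the tempered-softmax
confidence `s τ i₀ = exp (z i₀ / τ) / ∑ k, exp (z k / τ)` is strictly decreasing
in the temperature `τ` on `(0, ∞)`. -/
theorem tempered_softmax_confidence_strictAnti (c : ℕ) (hc : 2 ≤ c) (z : Fin c → ℝ)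
    (i₀ : Fin c) (hmax : ∀ j, j ≠ i₀ → z j < z i₀)
    (s : ℝ → Fin c → ℝ)
    (hs : ∀ τ i, s τ i = Real.exp (z i / τ) / ∑ k, Real.exp (z k / τ))
    (τ₁ τ₂ : ℝ) (h1 : 0 < τ₁) (h12 : τ₁ < τ₂) :
    s τ₂ i₀ < s τ₁ i₀ := by
  have : Nontrivial (Fin c) := Fin.nontrivial_iff_two_le.mpr hc
  have hconf : ∀ τ, s τ i₀ = (∑ k, exp ((z k - z i₀) / τ))⁻¹ := fun τ => by
    rw [hs, exp_div_sum_exp_eq_inv_sum_exp_sub (z · / τ)]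
    simp_rw [sub_div]
  rw [hconf, hconf]
  exact inv_strictAnti₀ (by positivity) (sum_exp_sub_max_div_lt hmax h1 h12)
end
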